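/- For the qubit dephasing channel (a Pauli channel with p₁ = p₂ = 0, p₀ = p, p₃ = 1−p, p ∈ [0,1]), the four eigenvalues λ_i from the Pauli-channel squashing construction reduce to λ₀ = λ₁ = (1 + 2√(p(1−p)) cos φ₃)/4 and λ₂ = λ₃ = (1 − 2√(p(1−p)) cos φ₃)/4, and the Shannon entropy H(λ) over φ₃ ∈ ℝ is minimized at φ₃ = 0, where it equals 1 + h₂((1 + 2√(p(1−p)))/2), with h₂ the binary entropy function. -/

import Mathlib

/-!
Writing `s = 2√(p(1-p))`, the eigenvalues come in two equal pairs `(1 ± s cos φ)/4`, so the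
entropy splits off one bit for the pair and equals `1 + h₂((1 + s cos φ)/2)`. Since `s ≤ 1` and
the binary entropy is symmetric about `1/2` and decreasing on `[1/2, 1]`, this is smallest when
`|cos φ|` is largest, e.g. at `φ = 0`.
-/

open BigOperators

/-- Shannon entropy (in bits) of a vector of four reals. -/
noncomputable def H4 (l : Fin 4 → ℝ) : ℝ := -∑ i, l i * Real.logb 2 (l i)

/-- Binary entropy function. -/
noncomputable def h2 (x : ℝ) : ℝ := -x * Real.logb 2 x - (1 - x) * Real.logb 2 (1 - x)

/-- The four eigenvalues λ₀,λ₁,λ₂,λ₃ of ρ_BE for the dephasing channel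
(p₁ = p₂ = 0, p₀ = p, p₃ = 1−p), as a function of the phase φ₃. -/
noncomputable def dephasingEig (p φ : ℝ) : Fin 4 → ℝ :=
  ![‖(Real.sqrt p : ℂ) + Complex.exp (φ * Complex.I) * (Real.sqrt (1 - p) : ℂ)‖ ^ 2 / 4,
    ‖(Real.sqrt p : ℂ) + Complex.exp (φ * Complex.I) * (Real.sqrt (1 - p) : ℂ)‖ ^ 2 / 4,
    ‖(Real.sqrt p : ℂ) - Complex.exp (φ * Complex.I) * (Real.sqrt (1 - p) : ℂ)‖ ^ 2 / 4,
    ‖(Real.sqrt p : ℂ) - Complex.exp (φ * Complex.I) * (Real.sqrt (1 - p) : ℂ)‖ ^ 2 / 4]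

open Real

lemma norm_ofReal_add_exp_mul_ofReal_sq (x y φ : ℝ) :
    ‖(x : ℂ) + Complex.exp (φ * Complex.I) * (y : ℂ)‖ ^ 2 = x ^ 2 + y ^ 2 + 2 * x * y * cos φ := by
  rw [← Complex.normSq_eq_norm_sq, Complex.exp_mul_I, Complex.normSq_apply]
  simp only [Complex.add_re, Complex.add_im, Complex.mul_re, Complex.mul_im, Complex.ofReal_re,
    Complex.ofReal_im, Complex.I_re, Complex.I_im, Complex.cos_ofReal_re, Complex.sin_ofReal_re,
    Complex.cos_ofReal_im, Complex.sin_ofReal_im]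
  linear_combination y ^ 2 * sin_sq_add_cos_sq φ

lemma norm_ofReal_sub_exp_mul_ofReal_sq (x y φ : ℝ) :
    ‖(x : ℂ) - Complex.exp (φ * Complex.I) * (y : ℂ)‖ ^ 2 = x ^ 2 + y ^ 2 - 2 * x * y * cos φ := by
  have h := norm_ofReal_add_exp_mul_ofReal_sq x (-y) φ
  push_cast at h
  rw [sub_eq_add_neg, ← mul_neg, h]
  ring

lemma dephasingEig_eq {p : ℝ} (hp0 : 0 ≤ p) (hp1 : p ≤ 1) (φ : ℝ) :
    dephasingEig p φ =
      ![(1 + 2 * √(p * (1 - p)) * cos φ) / 4, (1 + 2 * √(p * (1 - p)) * cos φ) / 4,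
        (1 - 2 * √(p * (1 - p)) * cos φ) / 4, (1 - 2 * √(p * (1 - p)) * cos φ) / 4] := by
  have hsq : √p ^ 2 + √(1 - p) ^ 2 = 1 := by
    rw [sq_sqrt hp0, sq_sqrt (sub_nonneg.mpr hp1)]
    ring
  have hprod : √p * √(1 - p) = √(p * (1 - p)) := (sqrt_mul hp0 _).symm
  ext i
  fin_cases i <;>
    simp only [dephasingEig, norm_ofReal_add_exp_mul_ofReal_sq,
      norm_ofReal_sub_exp_mul_ofReal_sq, hsq, mul_assoc, hprod]

lemma two_mul_sqrt_mul_one_sub_le_one (p : ℝ) : 2 * √(p * (1 - p)) ≤ 1 := by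
  have h : √(p * (1 - p)) ≤ 1 / 2 :=
    sqrt_le_iff.mpr ⟨by norm_num, by nlinarith [sq_nonneg (2 * p - 1)]⟩
  linarith

lemma mul_logb_two_half (y : ℝ) : y / 2 * logb 2 (y / 2) = (y * logb 2 y - y) / 2 := by
  rcases eq_or_ne y 0 with rfl | hy
  · simp
  · rw [logb_div hy two_ne_zero, logb_self_eq_one one_lt_two]
    ring

lemma H4_pairs (c : ℝ) :
    H4 ![(1 + c) / 4, (1 + c) / 4, (1 - c) / 4, (1 - c) / 4] = 1 + h2 ((1 + c) / 2) := by
  simp only [H4, h2, Fin.sum_univ_four, Matrix.cons_val_zero, Matrix.cons_val_one,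
    Matrix.cons_val_two, Matrix.cons_val_three, Matrix.head_cons, Matrix.tail_cons]
  have hplus := mul_logb_two_half ((1 + c) / 2)
  have hminus := mul_logb_two_half ((1 - c) / 2)
  rw [show (1 + c) / 2 / 2 = (1 + c) / 4 by ring] at hplus
  rw [show (1 - c) / 2 / 2 = (1 - c) / 4 by ring] at hminus
  rw [hplus, hminus, show 1 - (1 + c) / 2 = (1 - c) / 2 by ring]
  ring

lemma h2_eq_binEntropy_div_log_two (x : ℝ) : h2 x = binEntropy x / log 2 := by
  simp only [h2, binEntropy, log_inv, logb]
  ring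

lemma h2_one_add_div_two_le {u v : ℝ} (hvu : |v| ≤ u) (hu : u ≤ 1) :
    h2 ((1 + u) / 2) ≤ h2 ((1 + v) / 2) := by
  have habs : binEntropy ((1 + v) / 2) = binEntropy ((1 + |v|) / 2) := by
    rcases abs_choice v with h | h
    · rw [h]
    · rw [h, show (1 + -v) / 2 = 1 - (1 + v) / 2 by ring, binEntropy_one_sub]
  have hv0 := abs_nonneg v
  have hmono : binEntropy ((1 + u) / 2) ≤ binEntropy ((1 + |v|) / 2) :=
    binEntropy_strictAntiOn.antitoneOn
      ⟨by linarith, by linarith⟩ ⟨by linarith, by linarith⟩ (by linarith)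
  rw [h2_eq_binEntropy_div_log_two, h2_eq_binEntropy_div_log_two, habs]
  exact div_le_div_of_nonneg_right hmono (log_nonneg one_le_two)

/-- **Dephasing channel**: the eigenvalues reduce to
λ₀ = λ₁ = (1 + 2√(p(1−p)) cos φ₃)/4 and λ₂ = λ₃ = (1 − 2√(p(1−p)) cos φ₃)/4,
and the Shannon entropy H(λ) is minimized over φ₃ at φ₃ = 0, where it equals
1 + h₂((1 + 2√(p(1−p)))/2). -/
theorem dephasing_entropy_min (p : ℝ) (hp : p ∈ Set.Icc (0 : ℝ) 1) :
    (∀ φ : ℝ,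
      dephasingEig p φ 0 = (1 + 2 * Real.sqrt (p * (1 - p)) * Real.cos φ) / 4 ∧
      dephasingEig p φ 1 = (1 + 2 * Real.sqrt (p * (1 - p)) * Real.cos φ) / 4 ∧
      dephasingEig p φ 2 = (1 - 2 * Real.sqrt (p * (1 - p)) * Real.cos φ) / 4 ∧
      dephasingEig p φ 3 = (1 - 2 * Real.sqrt (p * (1 - p)) * Real.cos φ) / 4) ∧
    (∀ φ : ℝ, H4 (dephasingEig p 0) ≤ H4 (dephasingEig p φ)) ∧
    H4 (dephasingEig p 0) = 1 + h2 ((1 + 2 * Real.sqrt (p * (1 - p))) / 2) := by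
  obtain ⟨hp0, hp1⟩ := hp
  have hH (φ : ℝ) :
      H4 (dephasingEig p φ) = 1 + h2 ((1 + 2 * √(p * (1 - p)) * cos φ) / 2) := by
    rw [dephasingEig_eq hp0 hp1, ← H4_pairs]
  have hH0 : H4 (dephasingEig p 0) = 1 + h2 ((1 + 2 * √(p * (1 - p))) / 2) := by
    rw [hH, cos_zero, mul_one]
  refine ⟨fun φ => by simp [dephasingEig_eq hp0 hp1 φ], fun φ => ?_, hH0⟩
  have hs : 0 ≤ 2 * √(p * (1 - p)) := by positivity
  have hcos : |2 * √(p * (1 - p)) * cos φ| ≤ 2 * √(p * (1 - p)) := by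
    rw [abs_mul, abs_of_nonneg hs]
    exact mul_le_of_le_one_right hs (abs_cos_le_one φ)
  rw [hH0, hH]
  gcongr 1 + ?_
  exact h2_one_add_div_two_le hcos (two_mul_sqrt_mul_one_sub_le_one p)
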